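/- For every Banach space X and all ε, ε′ ∈ (0,1), |δ_uacs^X(ε) − δ_uacs^X(ε′)| ≤ |ε − ε′| / min{ε, ε′}. In particular δ_uacs^X is uniformly continuous on [a,1) for every 0 < a < 1. -/

import Mathlib

open Filter Topology

/-- The uacs modulus of convexity. -/
noncomputable def deltaUacs (X : Type*) [NormedAddCommGroup X] [NormedSpace ℝ X] (ε : ℝ) : ℝ :=
  sInf {d : ℝ | ∃ x y : X, ‖x‖ = 1 ∧ ‖y‖ = 1 ∧
    (∃ f : StrongDual ℝ X, ‖f‖ = 1 ∧ f x = 1 ∧ f y ≤ 1 - ε) ∧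
    d = 1 - ‖x + y‖ / 2}

namespace DeltaUacsAux

variable (X : Type*) [NormedAddCommGroup X] [NormedSpace ℝ X]

def dset (ε : ℝ) : Set ℝ :=
  {d : ℝ | ∃ x y : X, ‖x‖ = 1 ∧ ‖y‖ = 1 ∧
    (∃ f : StrongDual ℝ X, ‖f‖ = 1 ∧ f x = 1 ∧ f y ≤ 1 - ε) ∧
    d = 1 - ‖x + y‖ / 2}

lemma deltaUacs_eq (ε : ℝ) : deltaUacs X ε = sInf (dset X ε) := rfl

variable {X}

lemma dset_bddBelow (ε : ℝ) : BddBelow (dset X ε) := by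
  refine ⟨0, fun d hd => ?_⟩
  obtain ⟨x, y, hx, hy, -, hdv⟩ := hd
  have h2 : ‖x + y‖ ≤ 2 := by
    calc ‖x + y‖ ≤ ‖x‖ + ‖y‖ := norm_add_le x y
    _ = 2 := by rw [hx, hy]; norm_num
  rw [hdv]; linarith

lemma dset_antitone {ε ε' : ℝ} (h : ε ≤ ε') : dset X ε' ⊆ dset X ε := by
  rintro d ⟨x, y, hx, hy, ⟨f, hf, hfx, hfy⟩, hdv⟩
  exact ⟨x, y, hx, hy, ⟨f, hf, hfx, by linarith⟩, hdv⟩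

lemma exists_witness {ε ε' d : ℝ} (hε : 0 < ε) (hee : ε ≤ ε') (he1 : ε' < 1)
    (hd : d ∈ dset X ε) : ∃ d' ∈ dset X ε', d' ≤ d + (ε' - ε) / ε := by
  obtain ⟨x, y, hx, hy, ⟨f, hf, hfx, hfy⟩, hdv⟩ := hd
  set t : ℝ := ε' / ε with ht_def
  have ht1 : 1 ≤ t := (one_le_div hε).mpr hee
  have htε : t * ε = ε' := div_mul_cancel₀ ε' (ne_of_gt hε)
  set w : X := (1 - t) • x + t • y with hw_def
  have hw_eq : w = t • y - (t - 1) • x := by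
    rw [hw_def]; module
  have hr1 : 1 ≤ ‖w‖ := by
    have := norm_sub_norm_le (t • y) ((t - 1) • x)
    rw [← hw_eq, norm_smul, norm_smul, hx, hy, Real.norm_eq_abs, Real.norm_eq_abs,
      abs_of_nonneg (by linarith : (0:ℝ) ≤ t), abs_of_nonneg (by linarith : (0:ℝ) ≤ t - 1)] at this
    linarith
  have hr2 : ‖w‖ ≤ 2 * t - 1 := by
    have := norm_add_le ((1 - t) • x) (t • y)
    rw [← hw_def, norm_smul, norm_smul, hx, hy, Real.norm_eq_abs, Real.norm_eq_abs,
      abs_of_nonpos (by linarith : (1:ℝ) - t ≤ 0), abs_of_nonneg (by linarith : (0:ℝ) ≤ t)] at this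
    linarith
  set r : ℝ := ‖w‖ with hr_def
  have hrpos : 0 < r := by linarith
  have hrne : r ≠ 0 := ne_of_gt hrpos
  set z : X := r⁻¹ • w with hz_def
  have hz : ‖z‖ = 1 := by
    rw [hz_def, norm_smul, Real.norm_eq_abs, abs_of_pos (inv_pos.mpr hrpos), ← hr_def,
      inv_mul_cancel₀ hrne]
  -- value of f on w
  have hfw : f w ≤ 1 - ε' := by
    have : f w = (1 - t) * f x + t * f y := by
      rw [hw_def, map_add, map_smul, map_smul]; rfl
    rw [this, hfx]
    nlinarith [mul_le_mul_of_nonneg_left hfy (by linarith : (0:ℝ) ≤ t)]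
  have hfz : f z ≤ 1 - ε' := by
    have hfz' : f z = r⁻¹ * f w := by rw [hz_def, map_smul]; rfl
    rw [hfz', inv_mul_le_iff₀ hrpos]
    nlinarith
  -- norm estimate
  set a : ℝ := ‖x + y‖ with ha_def
  have ha0 : 0 ≤ a := norm_nonneg _
  have ha2 : a ≤ 2 := by
    have := norm_add_le x y; rw [hx, hy] at this; linarith
  set N : ℝ := ‖x + z‖ with hN_def
  have hN0 : 0 ≤ N := norm_nonneg _
  have hkey : t * a - (2 * t - 1 - r) ≤ r * N := by
    have heq : r • (x + z) = (r + 1 - 2 * t) • x + t • (x + y) := by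
      rw [hz_def, smul_add, smul_smul, mul_inv_cancel₀ hrne, one_smul, hw_def]; module
    have h1 : ‖r • (x + z)‖ = r * N := by
      rw [norm_smul, Real.norm_eq_abs, abs_of_pos hrpos, hN_def]
    have h2 : ‖t • (x + y)‖ - ‖(r + 1 - 2 * t) • x‖ ≤ ‖(r + 1 - 2 * t) • x + t • (x + y)‖ := by
      have h := norm_sub_le ((r + 1 - 2 * t) • x + t • (x + y)) ((r + 1 - 2 * t) • x)
      have heq2 : (r + 1 - 2 * t) • x + t • (x + y) - (r + 1 - 2 * t) • x = t • (x + y) := by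
        abel
      rw [heq2] at h
      linarith
    rw [norm_smul, norm_smul, hx, ← ha_def, Real.norm_eq_abs, Real.norm_eq_abs,
      abs_of_nonneg (by linarith : (0:ℝ) ≤ t),
      abs_of_nonpos (by linarith : r + 1 - 2 * t ≤ 0)] at h2
    rw [← h1, heq]; linarith
  -- conclude  N ≥ a - 2*t + 2
  have hNlow : a - 2 * t + 2 ≤ N := by
    rcases le_or_gt (a - 2 * t + 2) 0 with h | h
    · linarith
    · have hP : r * (a - 2 * t + 2) ≤ r * N := by
        refine le_trans ?_ hkey
        rcases le_or_gt (2 * t - 1 - a) 0 with hs | hs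
        · nlinarith [mul_nonneg (by linarith : (0:ℝ) ≤ 2 * t - 1 - r) (by linarith : (0:ℝ) ≤ a - 2 * t + 1)]
        · nlinarith [mul_nonneg (by linarith : (0:ℝ) ≤ r - 1) (le_of_lt hs)]
      exact le_of_mul_le_mul_left hP hrpos
  refine ⟨1 - ‖x + z‖ / 2, ⟨x, z, hx, hz, ⟨f, hf, hfx, hfz⟩, rfl⟩, ?_⟩
  have : (ε' - ε) / ε = t - 1 := by
    rw [ht_def]; field_simp
  rw [hdv, this, ← hN_def]
  linarith

end DeltaUacsAux

open DeltaUacsAux in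
theorem deltaUacs_lipschitz_like (X : Type*) [NormedAddCommGroup X] [NormedSpace ℝ X]
    [CompleteSpace X] (ε ε' : ℝ) (hε : ε ∈ Set.Ioo (0 : ℝ) 1) (hε' : ε' ∈ Set.Ioo (0 : ℝ) 1) :
    |deltaUacs X ε - deltaUacs X ε'| ≤ |ε - ε'| / min ε ε' := by
  -- reduce to the case ε ≤ ε'
  have key : ∀ a b : ℝ, a ∈ Set.Ioo (0:ℝ) 1 → b ∈ Set.Ioo (0:ℝ) 1 → a ≤ b →
      |deltaUacs X a - deltaUacs X b| ≤ |a - b| / min a b := by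
    intro a b ha hb hab
    have hmin : min a b = a := min_eq_left hab
    have habs : |a - b| = b - a := by rw [abs_sub_comm]; exact abs_of_nonneg (by linarith)
    rw [hmin, habs]
    rcases (dset X a).eq_empty_or_nonempty with hSe | hSne
    · have hSe' : dset X b = ∅ := Set.eq_empty_of_subset_empty (hSe ▸ dset_antitone hab)
      rw [deltaUacs_eq, deltaUacs_eq, hSe, hSe', Real.sInf_empty]
      simp only [sub_self, abs_zero]
      exact div_nonneg (by linarith) (le_of_lt ha.1)
    · -- b-set is nonempty
      obtain ⟨d, hd⟩ := hSne
      obtain ⟨d', hd', -⟩ := exists_witness ha.1 hab hb.2 hd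
      have hSne' : (dset X b).Nonempty := ⟨d', hd'⟩
      have h1 : deltaUacs X a ≤ deltaUacs X b := by
        rw [deltaUacs_eq, deltaUacs_eq]
        exact csInf_le_csInf (dset_bddBelow a) hSne' (dset_antitone hab)
      have h2 : deltaUacs X b ≤ deltaUacs X a + (b - a) / a := by
        rw [deltaUacs_eq, deltaUacs_eq]
        have : sInf (dset X b) - (b - a) / a ≤ sInf (dset X a) := by
          refine le_csInf ⟨d, hd⟩ fun e he => ?_
          obtain ⟨e', he', hle⟩ := exists_witness ha.1 hab hb.2 he
          have := csInf_le (dset_bddBelow b) he'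
          linarith
        linarith
      rw [abs_of_nonpos (by linarith)]
      linarith
  rcases le_total ε ε' with h | h
  · exact key ε ε' hε hε' h
  · have := key ε' ε hε' hε h
    rwa [abs_sub_comm, abs_sub_comm ε' ε, min_comm] at this
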